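/- Let σ̂(α) = σ√((δt)^{2H-1} + (α/(σ(δt)^{1-H}))√(2/π)) and C(α) the currency call price with volatility σ̂(α). Then ∂C/∂α = (S e^{-r_f(T-t)} σ √(2/π) (δt)^{H-1} / (2σ̂)) · √(T-t) · φ(d₁), and in particular C is strictly increasing in the transaction cost parameter α ≥ 0. -/

import Mathlib

open Real MeasureTheory

noncomputable def normalPDF (x : ℝ) : ℝ := Real.exp (-x^2/2) / Real.sqrt (2*Real.pi)

noncomputable def normalCDF (x : ℝ) : ℝ := ∫ t in Set.Iic x, normalPDF t

lemma normalPDF_pos (x : ℝ) : 0 < normalPDF x := by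
  unfold normalPDF
  have := Real.pi_pos
  positivity

lemma integrable_normalPDF : Integrable normalPDF := by
  have h : Integrable (fun x : ℝ => Real.exp (-(1/2 : ℝ) * x ^ 2)) :=
    integrable_exp_neg_mul_sq (by norm_num)
  have h2 : Integrable (fun x : ℝ => Real.exp (-x ^ 2 / 2)) := by
    convert h using 2 with x
    ring_nf
  have := h2.mul_const (Real.sqrt (2 * Real.pi))⁻¹
  apply this.congr
  filter_upwards with x
  simp [normalPDF, div_eq_mul_inv]

lemma hasDerivAt_normalCDF (x : ℝ) : HasDerivAt normalCDF (normalPDF x) x := by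
  have hint : ∀ y : ℝ, normalCDF y = normalCDF 0 + ∫ t in (0 : ℝ)..y, normalPDF t := by
    intro y
    have := intervalIntegral.integral_Iic_sub_Iic (integrable_normalPDF.integrableOn)
      (integrable_normalPDF.integrableOn) (a := 0) (b := y)
    unfold normalCDF
    linarith
  have hd : HasDerivAt (fun y => ∫ t in (0 : ℝ)..y, normalPDF t) (normalPDF x) x := by
    apply intervalIntegral.integral_hasDerivAt_right
      (integrable_normalPDF.intervalIntegrable)
      (integrable_normalPDF.aestronglyMeasurable.stronglyMeasurableAtFilter)
    exact (by unfold normalPDF; fun_prop : Continuous normalPDF).continuousAt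
  have := hd.const_add (normalCDF 0)
  apply this.congr_of_eventuallyEq
  filter_upwards with y using (hint y)

theorem call_increasing_in_transaction_cost
    (S K σ δt rd rf T t H : ℝ) (hS : 0 < S) (hK : 0 < K) (hσ : 0 < σ)
    (hδt : 0 < δt) (hT : t < T) (hH : H ∈ Set.Ioo (1/2 : ℝ) 1) :
    let σhat : ℝ → ℝ := fun α =>
      σ * Real.sqrt (δt ^ (2*H - 1) + (α / (σ * δt ^ (1 - H))) * Real.sqrt (2 / Real.pi))
    let d1 : ℝ → ℝ := fun α =>
      (Real.log (S/K) + (rd - rf + (σhat α)^2/2)*(T-t)) / (σhat α * Real.sqrt (T-t))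
    let d2 : ℝ → ℝ := fun α => d1 α - σhat α * Real.sqrt (T-t)
    let C : ℝ → ℝ := fun α => S * Real.exp (-rf*(T-t)) * normalCDF (d1 α)
      - K * Real.exp (-rd*(T-t)) * normalCDF (d2 α)
    (∀ α : ℝ, 0 ≤ α →
      HasDerivAt C
        (S * Real.exp (-rf*(T-t)) * σ * Real.sqrt (2 / Real.pi) * δt ^ (H - 1)
          / (2 * σhat α) * Real.sqrt (T-t) * normalPDF (d1 α)) α)
    ∧ StrictMonoOn C (Set.Ici 0) := by
  intro σhat d1 d2 C
  have hπ := Real.pi_pos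
  have hτ : (0:ℝ) < T - t := sub_pos.mpr hT
  have hsqτ : (0:ℝ) < Real.sqrt (T - t) := Real.sqrt_pos.mpr hτ
  -- inner function
  set g : ℝ → ℝ := fun α =>
    δt ^ (2*H - 1) + (α / (σ * δt ^ (1 - H))) * Real.sqrt (2 / Real.pi) with hg
  have hgpos : ∀ α : ℝ, 0 ≤ α → 0 < g α := by
    intro α hα
    have h1 : 0 < δt ^ (2*H - 1) := Real.rpow_pos_of_pos hδt _
    have h2 : 0 ≤ (α / (σ * δt ^ (1 - H))) * Real.sqrt (2 / Real.pi) := by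
      apply mul_nonneg _ (Real.sqrt_nonneg _)
      exact div_nonneg hα (by positivity)
    simpa [hg] using add_pos_of_pos_of_nonneg h1 h2
  have hσhatpos : ∀ α : ℝ, 0 ≤ α → 0 < σhat α := by
    intro α hα
    have := Real.sqrt_pos.mpr (hgpos α hα)
    simp only [σhat]
    positivity
  have hδtpow : δt ^ (H - 1) = (δt ^ (1 - H))⁻¹ := by
    rw [show H - 1 = -(1 - H) by ring, Real.rpow_neg hδt.le]
  -- derivative of σhat
  have hsder : ∀ α : ℝ, 0 ≤ α → HasDerivAt σhat
      (σ * Real.sqrt (2 / Real.pi) * δt ^ (H - 1) / (2 * σhat α)) α := by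
    intro α hα
    have hg' : HasDerivAt g ((1 / (σ * δt ^ (1 - H))) * Real.sqrt (2 / Real.pi)) α := by
      have : HasDerivAt (fun x : ℝ => (x / (σ * δt ^ (1 - H))) * Real.sqrt (2 / Real.pi))
          ((1 / (σ * δt ^ (1 - H))) * Real.sqrt (2 / Real.pi)) α := by
        simpa using (((hasDerivAt_id α).div_const (σ * δt ^ (1 - H))).mul_const
          (Real.sqrt (2 / Real.pi)))
      simpa [hg] using this.const_add (δt ^ (2*H - 1))
    have hsq := (hg'.sqrt (hgpos α hα).ne')
    have := hsq.const_mul σ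
    refine this.congr_deriv ?_
    symm
    have hgα : 0 < g α := hgpos α hα
    have hsqg : 0 < Real.sqrt (g α) := Real.sqrt_pos.mpr hgα
    have hδ1H : 0 < δt ^ (1 - H) := Real.rpow_pos_of_pos hδt _
    have hσg : σhat α = σ * Real.sqrt (g α) := rfl
    rw [hσg, hδtpow]
    have hc : δt ^ (1 - H) ≠ 0 := hδ1H.ne'
    have hd0 : Real.sqrt (g α) ≠ 0 := hsqg.ne'
    have hσ0 : σ ≠ 0 := hσ.ne'
    set b := Real.sqrt (2 / Real.pi) with hb
    set d := Real.sqrt (g α) with hd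
    field_simp
  have hderiv : ∀ α : ℝ, 0 ≤ α →
      HasDerivAt C
        (S * Real.exp (-rf*(T-t)) * σ * Real.sqrt (2 / Real.pi) * δt ^ (H - 1)
          / (2 * σhat α) * Real.sqrt (T-t) * normalPDF (d1 α)) α := by
    intro α hα
    have hs := hsder α hα
    set s' := σ * Real.sqrt (2 / Real.pi) * δt ^ (H - 1) / (2 * σhat α) with hs'
    have hσα : 0 < σhat α := hσhatpos α hα
    have hm : 0 < σhat α * Real.sqrt (T - t) := mul_pos hσα hsqτ
    -- derivative of d1
    have hnum : HasDerivAt (fun x => Real.log (S/K) + (rd - rf + (σhat x)^2/2)*(T-t))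
        (((2 * σhat α ^ 1 * s') / 2) * (T - t)) α := by
      exact ((((hs.pow 2).div_const 2).const_add (rd - rf)).mul_const (T - t)).const_add _
    have hden : HasDerivAt (fun x => σhat x * Real.sqrt (T - t))
        (s' * Real.sqrt (T - t)) α := hs.mul_const _
    have hd1 : HasDerivAt d1
        (((((2 * σhat α ^ 1 * s') / 2) * (T - t)) * (σhat α * Real.sqrt (T - t)) -
          (Real.log (S/K) + (rd - rf + (σhat α)^2/2)*(T-t)) * (s' * Real.sqrt (T - t))) /
          (σhat α * Real.sqrt (T - t)) ^ 2) α := hnum.div hden hm.ne'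
    set D1 := ((((2 * σhat α ^ 1 * s') / 2) * (T - t)) * (σhat α * Real.sqrt (T - t)) -
          (Real.log (S/K) + (rd - rf + (σhat α)^2/2)*(T-t)) * (s' * Real.sqrt (T - t))) /
          (σhat α * Real.sqrt (T - t)) ^ 2 with hD1
    have hd2 : HasDerivAt d2 (D1 - s' * Real.sqrt (T - t)) α := hd1.sub hden
    have hC1 : HasDerivAt (fun x => S * Real.exp (-rf*(T-t)) * normalCDF (d1 x))
        (S * Real.exp (-rf*(T-t)) * (normalPDF (d1 α) * D1)) α :=
      (((hasDerivAt_normalCDF (d1 α)).comp α hd1)).const_mul _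
    have hC2 : HasDerivAt (fun x => K * Real.exp (-rd*(T-t)) * normalCDF (d2 x))
        (K * Real.exp (-rd*(T-t)) * (normalPDF (d2 α) * (D1 - s' * Real.sqrt (T - t)))) α :=
      (((hasDerivAt_normalCDF (d2 α)).comp α hd2)).const_mul _
    have hC := hC1.sub hC2
    -- the key identity
    have hident : K * Real.exp (-rd*(T-t)) * normalPDF (d2 α)
        = S * Real.exp (-rf*(T-t)) * normalPDF (d1 α) := by
      have hd1m : d1 α * (σhat α * Real.sqrt (T - t))
          = Real.log (S/K) + (rd - rf + (σhat α)^2/2)*(T-t) := by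
        simp only [d1]
        field_simp
      have hm2 : (σhat α * Real.sqrt (T - t))^2 = (σhat α)^2 * (T - t) := by
        rw [mul_pow, Real.sq_sqrt hτ.le]
      have hlog : Real.log (S/K) = Real.log S - Real.log K := Real.log_div hS.ne' hK.ne'
      unfold normalPDF
      simp only [d2]
      rw [← mul_div_assoc, ← mul_div_assoc]
      rw [show K * Real.exp (-rd*(T-t)) * Real.exp (-(d1 α - σhat α * Real.sqrt (T-t))^2/2)
            = Real.exp (Real.log K + (-rd*(T-t)) + (-(d1 α - σhat α * Real.sqrt (T-t))^2/2))
          by rw [Real.exp_add, Real.exp_add, Real.exp_log hK],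
        show S * Real.exp (-rf*(T-t)) * Real.exp (-(d1 α)^2/2)
            = Real.exp (Real.log S + (-rf*(T-t)) + (-(d1 α)^2/2))
          by rw [Real.exp_add, Real.exp_add, Real.exp_log hS]]
      congr 1
      rw [Real.exp_eq_exp]
      nlinarith [hd1m, hm2, hlog]
    refine hC.congr_deriv ?_
    symm
    rw [hs']
    linear_combination (D1 - s' * Real.sqrt (T - t)) * hident
  refine ⟨hderiv, ?_⟩
  apply strictMonoOn_of_deriv_pos (convex_Ici 0)
  · exact fun x hx => ((hderiv x hx).continuousAt).continuousWithinAt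
  · intro x hx
    rw [interior_Ici] at hx
    rw [(hderiv x hx.le).deriv]
    have h1 : 0 < σhat x := hσhatpos x hx.le
    have h2 : 0 < normalPDF (d1 x) := normalPDF_pos _
    have h3 : 0 < δt ^ (H-1) := Real.rpow_pos_of_pos hδt _
    have h4 : 0 < Real.sqrt (2 / Real.pi) := Real.sqrt_pos.mpr (by positivity)
    have h5 : 0 < S * Real.exp (-rf*(T-t)) * σ * Real.sqrt (2 / Real.pi) * δt ^ (H-1) := by
      positivity
    exact mul_pos (mul_pos (div_pos h5 (by linarith)) hsqτ) h2
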